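/- Let λ > 0, ζ > 0, and k > max{1, 8ζ/λ² − 1}. Define α̃ = (k+1)²λ / [(k+1)²λ² + 2k²ζ]. Then h(α̃) = [4kζ + 2(k+1)²ζ] / [(k+1)²λ² + 2k²ζ] < 1, where h(α) = ((k+1)²/k²)(1−αλ)² + (2/k)(1−αλ) + 2α²ζ. -/

import Mathlib

/-!
With `D = (k+1)²λ² + 2k²ζ` one has `1 - α̃λ = 2k²ζ / D`, and the first and last terms of `h(α̃)`
combine to `2(k+1)²ζ (2k²ζ + (k+1)²λ²) / D² = 2(k+1)²ζ / D`. The inequality `h(α̃) < 1` then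
amounts to `8kζ + 2ζ < (k+1)²λ²`, which follows from `8ζ < (k+1)λ²` after multiplying by `k + 1`.
-/

/-- The function `h` of the AL-DSGD analysis. -/
noncomputable def mixingRate (lam ζ k α : ℝ) : ℝ :=
  (k + 1) ^ 2 / k ^ 2 * (1 - α * lam) ^ 2 + 2 / k * (1 - α * lam) + 2 * α ^ 2 * ζ

noncomputable def alphaTilde (lam ζ k : ℝ) : ℝ :=
  (k + 1) ^ 2 * lam / ((k + 1) ^ 2 * lam ^ 2 + 2 * k ^ 2 * ζ)

section
variable {lam ζ k : ℝ}

theorem one_sub_alphaTilde_mul (hD : (k + 1) ^ 2 * lam ^ 2 + 2 * k ^ 2 * ζ ≠ 0) :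
    1 - alphaTilde lam ζ k * lam = 2 * k ^ 2 * ζ / ((k + 1) ^ 2 * lam ^ 2 + 2 * k ^ 2 * ζ) := by
  rw [alphaTilde, eq_div_iff hD, sub_mul, div_mul_eq_mul_div, div_mul_cancel₀ _ hD]
  ring

theorem mixingRate_alphaTilde (hk : k ≠ 0) (hD : (k + 1) ^ 2 * lam ^ 2 + 2 * k ^ 2 * ζ ≠ 0) :
    mixingRate lam ζ k (alphaTilde lam ζ k) =
      (4 * k * ζ + 2 * (k + 1) ^ 2 * ζ) / ((k + 1) ^ 2 * lam ^ 2 + 2 * k ^ 2 * ζ) := by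
  rw [mixingRate, one_sub_alphaTilde_mul hD, alphaTilde]
  -- `field_simp` would renormalise the denominator past recognising `hD`, so keep it atomic.
  set D := (k + 1) ^ 2 * lam ^ 2 + 2 * k ^ 2 * ζ with hD_def
  field_simp
  rw [hD_def]
  ring

theorem mixingRate_numerator_lt_denominator (hζ : 0 < ζ) (h8 : 8 * ζ < (k + 1) * lam ^ 2) :
    4 * k * ζ + 2 * (k + 1) ^ 2 * ζ < (k + 1) ^ 2 * lam ^ 2 + 2 * k ^ 2 * ζ := by
  have hk1 : 0 < k + 1 := pos_of_mul_pos_left (by linarith) (sq_nonneg lam)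
  have : 8 * ζ * (k + 1) < (k + 1) ^ 2 * lam ^ 2 := by nlinarith
  nlinarith

end

theorem h_at_alphaTilde_lt_one (lam ζ k : ℝ) (hlam : 0 < lam) (hζ : 0 < ζ)
    (hk : 1 < k) (hk2 : 8 * ζ / lam ^ 2 - 1 < k) :
    (((k + 1) ^ 2 / k ^ 2) *
        (1 - ((k + 1) ^ 2 * lam / ((k + 1) ^ 2 * lam ^ 2 + 2 * k ^ 2 * ζ)) * lam) ^ 2 +
      (2 / k) * (1 - ((k + 1) ^ 2 * lam / ((k + 1) ^ 2 * lam ^ 2 + 2 * k ^ 2 * ζ)) * lam) +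
      2 * ((k + 1) ^ 2 * lam / ((k + 1) ^ 2 * lam ^ 2 + 2 * k ^ 2 * ζ)) ^ 2 * ζ) =
        (4 * k * ζ + 2 * (k + 1) ^ 2 * ζ) / ((k + 1) ^ 2 * lam ^ 2 + 2 * k ^ 2 * ζ) ∧
    (4 * k * ζ + 2 * (k + 1) ^ 2 * ζ) / ((k + 1) ^ 2 * lam ^ 2 + 2 * k ^ 2 * ζ) < 1 := by
  have hD : 0 < (k + 1) ^ 2 * lam ^ 2 + 2 * k ^ 2 * ζ := by positivity
  have h8 : 8 * ζ < (k + 1) * lam ^ 2 := by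
    rw [← div_lt_iff₀ (by positivity)]
    linarith
  refine ⟨mixingRate_alphaTilde (by positivity) hD.ne', ?_⟩
  rw [div_lt_one hD]
  exact mixingRate_numerator_lt_denominator hζ h8
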